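/- For a quasi-Hopf algebra H and a left H-comodule algebra B, setting p̃_λ = X̃²_λ S⁻¹(X̃¹_λ β) ⊗ X̃³_λ and q̃_λ = S(x̃¹_λ)α x̃²_λ ⊗ x̃³_λ, the identities λ(q̃²_λ) p̃_λ [S⁻¹(q̃¹_λ)⊗1] = 1⊗1 and [S(p̃¹_λ)⊗1] q̃_λ λ(p̃²_λ) = 1⊗1 hold in H⊗B. -/

import Mathlib

open TensorProduct

noncomputable section

namespace QuasiHopfPaper

variable (k : Type) [Field k]
variable (H : Type) [Ring H] [Algebra k H]

/-- A quasi-bialgebra in the sense of Drinfeld. -/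
structure QuasiBialgebra where
  comul : H →ₐ[k] H ⊗[k] H
  counit : H →ₐ[k] k
  Phi : H ⊗[k] (H ⊗[k] H)
  PhiInv : H ⊗[k] (H ⊗[k] H)
  Phi_inv_mul : Phi * PhiInv = 1
  inv_Phi_mul : PhiInv * Phi = 1
  quasi_coassoc : ∀ h : H,
    Algebra.TensorProduct.map (AlgHom.id k H) comul (comul h)
      = Phi * (Algebra.TensorProduct.assoc k k k H H H)
          (Algebra.TensorProduct.map comul (AlgHom.id k H) (comul h)) * PhiInv
  counit_right : ∀ h : H,
    (Algebra.TensorProduct.rid k k H)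
      (Algebra.TensorProduct.map (AlgHom.id k H) counit (comul h)) = h
  counit_left : ∀ h : H,
    (Algebra.TensorProduct.lid k H)
      (Algebra.TensorProduct.map counit (AlgHom.id k H) (comul h)) = h
  cocycle :
    (Algebra.TensorProduct.includeRight (R := k) (A := H)
        (B := H ⊗[k] (H ⊗[k] H)) Phi)
      * (Algebra.TensorProduct.map (AlgHom.id k H)
          ((Algebra.TensorProduct.assoc k k k H H H).toAlgHom.comp
            (Algebra.TensorProduct.map comul (AlgHom.id k H))) Phi)
      * ((Algebra.TensorProduct.map (AlgHom.id k H)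
            (Algebra.TensorProduct.assoc k k k H H H).toAlgHom)
          ((Algebra.TensorProduct.assoc k k k H (H ⊗[k] H) H) (Phi ⊗ₜ[k] (1 : H))))
    = (Algebra.TensorProduct.map (AlgHom.id k H)
          (Algebra.TensorProduct.map (AlgHom.id k H) comul) Phi)
      * ((Algebra.TensorProduct.assoc k k k H H (H ⊗[k] H))
          (Algebra.TensorProduct.map comul (AlgHom.id k (H ⊗[k] H)) Phi))
  normalized :
    Algebra.TensorProduct.map (AlgHom.id k H)
      ((Algebra.TensorProduct.lid k H).toAlgHom.comp
        (Algebra.TensorProduct.map counit (AlgHom.id k H))) Phi = 1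

variable {k H}

/-- The quasi-Hopf antipode axioms for `(S, α, β)` over a quasi-bialgebra. -/
structure IsAntipode (Q : QuasiBialgebra k H) (S : H →ₗ[k] H) (α β : H) : Prop where
  anti_mul : ∀ a b : H, S (a * b) = S b * S a
  map_one : S 1 = 1
  bijective : Function.Bijective S
  left_id : ∀ h : H,
    LinearMap.mul' k H
      (TensorProduct.map S (LinearMap.mulLeft k α) (Q.comul h)) = Q.counit h • α
  right_id : ∀ h : H,
    LinearMap.mul' k H
      (TensorProduct.map (LinearMap.mulRight k β) S (Q.comul h)) = Q.counit h • β
  phi_id :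
    LinearMap.mul' k H
      (TensorProduct.map (LinearMap.mulRight k β)
        ((LinearMap.mul' k H).comp (TensorProduct.map S (LinearMap.mulLeft k α)))
        Q.Phi) = 1
  phiInv_id :
    LinearMap.mul' k H
      (TensorProduct.map ((LinearMap.mulRight k α).comp S)
        ((LinearMap.mul' k H).comp
          (TensorProduct.map LinearMap.id ((LinearMap.mulLeft k β).comp S)))
        Q.PhiInv) = 1


variable (Q : QuasiBialgebra k H)

set_option maxHeartbeats 1000000

/-- doc -/
structure LeftComoduleAlgebra (B : Type) [Ring B] [Algebra k B] where
  lambda : B →ₐ[k] H ⊗[k] B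
  Phi : H ⊗[k] (H ⊗[k] B)
  PhiInv : H ⊗[k] (H ⊗[k] B)
  Phi_inv_mul : Phi * PhiInv = 1
  inv_Phi_mul : PhiInv * Phi = 1
  coassoc : ∀ b : B,
    Algebra.TensorProduct.map (AlgHom.id k H) lambda (lambda b) * Phi
      = Phi * (Algebra.TensorProduct.assoc k k k H H B)
          (Algebra.TensorProduct.map Q.comul (AlgHom.id k B) (lambda b))
  pentagon :
    (Algebra.TensorProduct.includeRight (R := k) (A := H)
        (B := H ⊗[k] (H ⊗[k] B)) Phi)
      * (Algebra.TensorProduct.map (AlgHom.id k H)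
          ((Algebra.TensorProduct.assoc k k k H H B).toAlgHom.comp
            (Algebra.TensorProduct.map Q.comul (AlgHom.id k B))) Phi)
      * ((Algebra.TensorProduct.map (AlgHom.id k H)
            (Algebra.TensorProduct.assoc k k k H H B).toAlgHom)
          ((Algebra.TensorProduct.assoc k k k H (H ⊗[k] H) B) (Q.Phi ⊗ₜ[k] (1 : B))))
    = (Algebra.TensorProduct.map (AlgHom.id k H)
          (Algebra.TensorProduct.map (AlgHom.id k H) lambda) Phi)
      * ((Algebra.TensorProduct.assoc k k k H H (H ⊗[k] B))
          (Algebra.TensorProduct.map Q.comul (AlgHom.id k (H ⊗[k] B)) Phi))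
  counit_lambda : ∀ b : B,
    (Algebra.TensorProduct.lid k B)
      (Algebra.TensorProduct.map Q.counit (AlgHom.id k B) (lambda b)) = b
  normal_mid :
    Algebra.TensorProduct.map (AlgHom.id k H)
      ((Algebra.TensorProduct.lid k B).toAlgHom.comp
        (Algebra.TensorProduct.map Q.counit (AlgHom.id k B))) Phi = 1
  normal_left :
    (Algebra.TensorProduct.lid k (H ⊗[k] B))
      (Algebra.TensorProduct.map Q.counit (AlgHom.id k (H ⊗[k] B)) Phi) = 1

/-- A right `H`-comodule algebra over a quasi-bialgebra (Hausser–Nill). -/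
structure RightComoduleAlgebra (A : Type) [Ring A] [Algebra k A] where
  rho : A →ₐ[k] A ⊗[k] H
  Phi : A ⊗[k] (H ⊗[k] H)
  PhiInv : A ⊗[k] (H ⊗[k] H)
  Phi_inv_mul : Phi * PhiInv = 1
  inv_Phi_mul : PhiInv * Phi = 1
  coassoc : ∀ a : A,
    Phi * (Algebra.TensorProduct.assoc k k k A H H)
        (Algebra.TensorProduct.map rho (AlgHom.id k H) (rho a))
      = Algebra.TensorProduct.map (AlgHom.id k A) Q.comul (rho a) * Phi
  pentagon :
    (Algebra.TensorProduct.includeRight (R := k) (A := A)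
        (B := H ⊗[k] (H ⊗[k] H)) Q.Phi)
      * (Algebra.TensorProduct.map (AlgHom.id k A)
          ((Algebra.TensorProduct.assoc k k k H H H).toAlgHom.comp
            (Algebra.TensorProduct.map Q.comul (AlgHom.id k H))) Phi)
      * ((Algebra.TensorProduct.map (AlgHom.id k A)
            (Algebra.TensorProduct.assoc k k k H H H).toAlgHom)
          ((Algebra.TensorProduct.assoc k k k A (H ⊗[k] H) H) (Phi ⊗ₜ[k] (1 : H))))
    = (Algebra.TensorProduct.map (AlgHom.id k A)
          (Algebra.TensorProduct.map (AlgHom.id k H) Q.comul) Phi)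
      * ((Algebra.TensorProduct.assoc k k k A H (H ⊗[k] H))
          (Algebra.TensorProduct.map rho (AlgHom.id k (H ⊗[k] H)) Phi))
  counit_rho : ∀ a : A,
    (Algebra.TensorProduct.rid k k A)
      (Algebra.TensorProduct.map (AlgHom.id k A) Q.counit (rho a)) = a
  normal_mid :
    Algebra.TensorProduct.map (AlgHom.id k A)
      ((Algebra.TensorProduct.lid k H).toAlgHom.comp
        (Algebra.TensorProduct.map Q.counit (AlgHom.id k H))) Phi = 1
  normal_right :
    Algebra.TensorProduct.map (AlgHom.id k A)
      ((Algebra.TensorProduct.rid k k H).toAlgHom.comp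
        (Algebra.TensorProduct.map (AlgHom.id k H) Q.counit)) Phi = 1


section Helpers

variable {M N P Q' : Type} [AddCommGroup M] [AddCommGroup N] [AddCommGroup P]
  [AddCommGroup Q'] [Module k M] [Module k N] [Module k P] [Module k Q']

/-- Componentwise action of `M ⊗ N` on `P ⊗ Q'` coming from actions of the factors. -/
def endTensor (f : M →ₗ[k] P →ₗ[k] P) (g : N →ₗ[k] Q' →ₗ[k] Q') :
    M ⊗[k] N →ₗ[k] (P ⊗[k] Q') →ₗ[k] (P ⊗[k] Q') :=
  (TensorProduct.homTensorHomMap (RingHom.id k) P Q' P Q').comp (TensorProduct.map f g)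

end Helpers

/-- A right `H`-module coalgebra: a coalgebra in the monoidal category `M_H`. -/
structure RightModuleCoalgebra (C : Type) [AddCommGroup C] [Module k C] where
  ract : C →ₗ[k] H →ₗ[k] C
  ract_one : ∀ c : C, ract c 1 = c
  ract_mul : ∀ (c : C) (h h' : H), ract (ract c h) h' = ract c (h * h')
  comul : C →ₗ[k] C ⊗[k] C
  counit : C →ₗ[k] k
  quasi_coassoc : ∀ c : C,
    (endTensor ract.flip (endTensor ract.flip ract.flip) Q.PhiInv)
        ((TensorProduct.assoc k C C C)
          (TensorProduct.map comul LinearMap.id (comul c)))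
      = TensorProduct.map LinearMap.id comul (comul c)
  comul_ract : ∀ (c : C) (h : H),
    comul (ract c h) = (endTensor ract.flip ract.flip) (Q.comul h) (comul c)
  counit_ract : ∀ (c : C) (h : H), counit (ract c h) = counit c * Q.counit h
  counit_comul_left : ∀ c : C,
    (TensorProduct.lid k C) (TensorProduct.map counit LinearMap.id (comul c)) = c
  counit_comul_right : ∀ c : C,
    (TensorProduct.rid k C) (TensorProduct.map LinearMap.id counit (comul c)) = c

/-- A left `H`-module algebra: an algebra in the monoidal category `_H M`
(the multiplication is only quasi-associative). -/
structure LeftModuleAlgebra (A : Type) [AddCommGroup A] [Module k A] where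
  act : H →ₗ[k] A →ₗ[k] A
  act_one : ∀ a : A, act 1 a = a
  act_mul : ∀ (h h' : H) (a : A), act (h * h') a = act h (act h' a)
  mul : A →ₗ[k] A →ₗ[k] A
  one : A
  one_mul : ∀ a : A, mul one a = a
  mul_one : ∀ a : A, mul a one = a
  quasi_assoc : ∀ a a' a'' : A,
    mul (mul a a') a''
      = TensorProduct.lift mul
          ((TensorProduct.map LinearMap.id (TensorProduct.lift mul))
            ((endTensor act (endTensor act act) Q.Phi) (a ⊗ₜ[k] (a' ⊗ₜ[k] a''))))
  act_mul_distrib : ∀ (h : H) (a a' : A),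
    act h (mul a a')
      = TensorProduct.lift mul ((endTensor act act (Q.comul h)) (a ⊗ₜ[k] a'))
  act_one_elem : ∀ h : H, act h one = Q.counit h • one


section Smash

variable {A : Type} [AddCommGroup A] [Module k A]
variable {B : Type} [Ring B] [Algebra k B]

/-- The generalized smash product multiplication `A ▶< B`:
`(a ▶< b)(a' ▶< b') = (x̃¹·a)(x̃² b₋₁ · a') ▶< x̃³ b₀ b'`, built from the
`H`-action `actA` and multiplication `mulA` on `A`, the coaction `lam` on `B`
and the (inverse) reassociator `phiInv` of the comodule algebra `B`. -/
def smashMul (mulA : A →ₗ[k] A →ₗ[k] A) (actA : H →ₗ[k] A →ₗ[k] A)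
    (lam : B →ₗ[k] H ⊗[k] B) (phiInv : H ⊗[k] (H ⊗[k] B)) :
    (A ⊗[k] B) →ₗ[k] (A ⊗[k] B) →ₗ[k] (A ⊗[k] B) :=
  let aAct : H ⊗[k] A →ₗ[k] A := TensorProduct.lift actA
  let mA : A ⊗[k] A →ₗ[k] A := TensorProduct.lift mulA
  let mH : H ⊗[k] H →ₗ[k] H := LinearMap.mul' k H
  let mB : B ⊗[k] B →ₗ[k] B := LinearMap.mul' k B
  let f : ((H ⊗[k] A) ⊗[k] ((H ⊗[k] H) ⊗[k] A)) →ₗ[k] A :=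
    mA ∘ₗ TensorProduct.map aAct (aAct ∘ₗ TensorProduct.map mH LinearMap.id)
  let g : (B ⊗[k] (B ⊗[k] B)) →ₗ[k] B := mB ∘ₗ TensorProduct.map LinearMap.id mB
  let r : (B ⊗[k] ((H ⊗[k] B) ⊗[k] B)) →ₗ[k] (H ⊗[k] (B ⊗[k] (B ⊗[k] B))) :=
    (TensorProduct.assoc k H B (B ⊗[k] B)).toLinearMap
      ∘ₗ TensorProduct.map (TensorProduct.comm k B H).toLinearMap LinearMap.id
      ∘ₗ (TensorProduct.assoc k B H (B ⊗[k] B)).symm.toLinearMap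
      ∘ₗ TensorProduct.map LinearMap.id (TensorProduct.assoc k H B B).toLinearMap
  let j2 : ((H ⊗[k] A) ⊗[k] H) →ₗ[k] ((H ⊗[k] H) ⊗[k] A) :=
    (TensorProduct.assoc k H H A).symm.toLinearMap
      ∘ₗ TensorProduct.map LinearMap.id (TensorProduct.comm k A H).toLinearMap
      ∘ₗ (TensorProduct.assoc k H A H).toLinearMap
  let j : (((H ⊗[k] A) ⊗[k] (H ⊗[k] A)) ⊗[k] H) →ₗ[k]
      ((H ⊗[k] A) ⊗[k] ((H ⊗[k] H) ⊗[k] A)) :=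
    TensorProduct.map LinearMap.id j2
      ∘ₗ (TensorProduct.assoc k (H ⊗[k] A) (H ⊗[k] A) H).toLinearMap
  let σ : ((H ⊗[k] (H ⊗[k] B)) ⊗[k] ((A ⊗[k] (H ⊗[k] B)) ⊗[k] (A ⊗[k] B))) →ₗ[k]
      (((H ⊗[k] A) ⊗[k] ((H ⊗[k] H) ⊗[k] A)) ⊗[k] (B ⊗[k] (B ⊗[k] B))) :=
    TensorProduct.map j LinearMap.id
      ∘ₗ (TensorProduct.assoc k ((H ⊗[k] A) ⊗[k] (H ⊗[k] A)) H
            (B ⊗[k] (B ⊗[k] B))).symm.toLinearMap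
      ∘ₗ TensorProduct.map (TensorProduct.tensorTensorTensorComm k H H A A).toLinearMap r
      ∘ₗ (TensorProduct.tensorTensorTensorComm k (H ⊗[k] H) B (A ⊗[k] A)
            ((H ⊗[k] B) ⊗[k] B)).toLinearMap
      ∘ₗ TensorProduct.map (TensorProduct.assoc k H H B).symm.toLinearMap
          (TensorProduct.tensorTensorTensorComm k A (H ⊗[k] B) A B).toLinearMap
  let pre : ((A ⊗[k] B) ⊗[k] (A ⊗[k] B)) →ₗ[k]
      ((A ⊗[k] (H ⊗[k] B)) ⊗[k] (A ⊗[k] B)) :=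
    TensorProduct.map (TensorProduct.map LinearMap.id lam) LinearMap.id
  (TensorProduct.lift.equiv (RingHom.id k) (A ⊗[k] B) (A ⊗[k] B) (A ⊗[k] B)).symm
    (TensorProduct.map f g ∘ₗ σ
      ∘ₗ TensorProduct.mk k (H ⊗[k] (H ⊗[k] B)) _ phiInv ∘ₗ pre)

end Smash


section PQ

variable {k : Type} [Field k] {H : Type} [Ring H] [Algebra k H]
variable {B : Type} [Ring B] [Algebra k B]

/-- `p̃_λ = X̃²_λ S⁻¹(X̃¹_λ β) ⊗ X̃³_λ`, extracted from `w = Φ_λ`. -/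
def pElt (Sinv : H →ₗ[k] H) (β : H) (w : H ⊗[k] (H ⊗[k] B)) : H ⊗[k] B :=
  (TensorProduct.map
      ((LinearMap.mul' k H) ∘ₗ (TensorProduct.comm k H H).toLinearMap
        ∘ₗ TensorProduct.map (Sinv ∘ₗ LinearMap.mulRight k β) LinearMap.id)
      LinearMap.id)
    ((TensorProduct.assoc k H H B).symm w)

/-- `q̃_λ = S(x̃¹_λ) α x̃²_λ ⊗ x̃³_λ`, extracted from `w = Φ_λ⁻¹`. -/
def qElt (S : H →ₗ[k] H) (α : H) (w : H ⊗[k] (H ⊗[k] B)) : H ⊗[k] B :=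
  (TensorProduct.map
      ((LinearMap.mul' k H) ∘ₗ TensorProduct.map S (LinearMap.mulLeft k α))
      LinearMap.id)
    ((TensorProduct.assoc k H H B).symm w)

/-- The bilinear map `(x', w) ↦ (w * p) * (x' ⊗ 1)` in `H ⊗ B`. -/
def conjR (p : H ⊗[k] B) : H →ₗ[k] (H ⊗[k] B) →ₗ[k] (H ⊗[k] B) :=
  ((LinearMap.llcomp k (H ⊗[k] B) (H ⊗[k] B) (H ⊗[k] B)).flip
      (LinearMap.mulRight k p))
    ∘ₗ ((LinearMap.mul k (H ⊗[k] B)).flip ∘ₗ (TensorProduct.mk k H B).flip 1)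

/-- The bilinear map `(x', w) ↦ ((x' ⊗ 1) * q) * w` in `H ⊗ B`. -/
def conjL (q : H ⊗[k] B) : H →ₗ[k] (H ⊗[k] B) →ₗ[k] (H ⊗[k] B) :=
  (LinearMap.mul k (H ⊗[k] B)) ∘ₗ (LinearMap.mulRight k q)
    ∘ₗ (TensorProduct.mk k H B).flip 1

end PQ


/-!
Both identities are images of the pentagon identity for `Φ_λ` under linear contractions
`H ⊗ H ⊗ H ⊗ B → H ⊗ B`. The first left-hand side is the contraction
`a ⊗ b ⊗ c ⊗ d ↦ c S⁻¹(α b β) a ⊗ d` of `(id ⊗ id ⊗ λ)(Φ_λ⁻¹) (1 ⊗ Φ_λ)`, and by the pentagon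
this product equals `(Δ ⊗ id ⊗ id)(Φ_λ) (Φ⁻¹ ⊗ 1) (id ⊗ Δ ⊗ id)(Φ_λ⁻¹)`. The antipode axioms
`S(h₁) α h₂ = ε(h) α` and `h₁ β S(h₂) = ε(h) β` let the contraction turn the two comultiplied
factors into counits, which are trivial by the normalization of `Φ_λ`. What remains is
`S⁻¹(S(x¹) α x² β S(x³)) ⊗ 1 = 1 ⊗ 1` for `Φ⁻¹ = x¹ ⊗ x² ⊗ x³`. The second identity is the
mirror image, with the contraction `a ⊗ b ⊗ c ⊗ d ↦ a β S(b) α c ⊗ d` and the axiom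
`X¹ β S(X²) α X³ = 1`.
-/

namespace IsAntipode

variable {Q} {S Sinv : H →ₗ[k] H} {α β : H}

theorem inv_map_mul (hS : IsAntipode Q S α β) (hinv₁ : ∀ h, Sinv (S h) = h)
    (hinv₂ : ∀ h, S (Sinv h) = h) (a b : H) : Sinv (a * b) = Sinv b * Sinv a := by
  rw [← hinv₁ (Sinv b * Sinv a), hS.anti_mul, hinv₂, hinv₂]

theorem inv_map_one (hS : IsAntipode Q S α β) (hinv₁ : ∀ h, Sinv (S h) = h) : Sinv 1 = 1 := by
  simpa [hS.map_one] using hinv₁ 1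

end IsAntipode

theorem _root_.TensorProduct.induction_on₃ {R M N P : Type*} [CommSemiring R] [AddCommMonoid M]
    [AddCommMonoid N] [AddCommMonoid P] [Module R M] [Module R N] [Module R P]
    {motive : M ⊗[R] (N ⊗[R] P) → Prop} (x : M ⊗[R] (N ⊗[R] P)) (zero : motive 0)
    (tmul : ∀ m n p, motive (m ⊗ₜ (n ⊗ₜ p)))
    (add : ∀ x y, motive x → motive y → motive (x + y)) : motive x := by
  induction x using TensorProduct.induction_on with
  | zero => exact zero
  | add x y hx hy => exact add x y hx hy
  | tmul m np =>
    induction np using TensorProduct.induction_on with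
    | zero => simpa using zero
    | tmul n p => exact tmul m n p
    | add y z hy hz => simpa [TensorProduct.tmul_add] using add _ _ hy hz

section Legs

variable {B C : Type} [Ring B] [Algebra k B] [Ring C] [Algebra k C]

-- Without this shortcut, `map_one` for algebra maps into the fourfold tensor product fails:
-- instance search caches a failed `Semiring (H ⊗ (H ⊗ B))` subgoal.
instance : Semiring (H ⊗[k] (H ⊗[k] (H ⊗[k] B))) := inferInstance

abbrev comulLeft : H ⊗[k] (H ⊗[k] B) →ₐ[k] H ⊗[k] (H ⊗[k] (H ⊗[k] B)) :=
  (Algebra.TensorProduct.assoc k k k H H (H ⊗[k] B)).toAlgHom.comp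
    (Algebra.TensorProduct.rTensor (H ⊗[k] B) Q.comul)

abbrev comulMid : H ⊗[k] (H ⊗[k] B) →ₐ[k] H ⊗[k] (H ⊗[k] (H ⊗[k] B)) :=
  Algebra.TensorProduct.lTensor H
    ((Algebra.TensorProduct.assoc k k k H H B).toAlgHom.comp
      (Algebra.TensorProduct.rTensor B Q.comul))

abbrev counitLeft : H ⊗[k] (H ⊗[k] B) →ₐ[k] H ⊗[k] B :=
  (Algebra.TensorProduct.lid k (H ⊗[k] B)).toAlgHom.comp
    (Algebra.TensorProduct.rTensor (H ⊗[k] B) Q.counit)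

abbrev counitMid : H ⊗[k] (H ⊗[k] B) →ₐ[k] H ⊗[k] B :=
  Algebra.TensorProduct.lTensor H
    ((Algebra.TensorProduct.lid k B).toAlgHom.comp (Algebra.TensorProduct.rTensor B Q.counit))

abbrev includeLeftAssoc : H ⊗[k] (H ⊗[k] H) →ₐ[k] H ⊗[k] (H ⊗[k] (H ⊗[k] B)) :=
  (Algebra.TensorProduct.lTensor H (Algebra.TensorProduct.assoc k k k H H B).toAlgHom).comp
    ((Algebra.TensorProduct.assoc k k k H (H ⊗[k] H) B).toAlgHom.comp
      Algebra.TensorProduct.includeLeft)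

abbrev includeRight₂ : C →ₐ[k] H ⊗[k] (H ⊗[k] C) :=
  Algebra.TensorProduct.includeRight.comp Algebra.TensorProduct.includeRight

abbrev includeOuter : H ⊗[k] B →ₐ[k] H ⊗[k] (H ⊗[k] (H ⊗[k] B)) :=
  Algebra.TensorProduct.lTensor H includeRight₂

abbrev lTensor₂ (f : B →ₐ[k] C) : H ⊗[k] (H ⊗[k] B) →ₐ[k] H ⊗[k] (H ⊗[k] C) :=
  Algebra.TensorProduct.lTensor H (Algebra.TensorProduct.lTensor H f)

end Legs

namespace LeftComoduleAlgebra

variable {Q} {B : Type} [Ring B] [Algebra k B] (L : LeftComoduleAlgebra Q B)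

theorem pentagon_eq :
    Algebra.TensorProduct.includeRight L.Phi * comulMid Q L.Phi * includeLeftAssoc Q.Phi
      = lTensor₂ L.lambda L.Phi * comulLeft Q L.Phi :=
  L.pentagon

theorem lTensor₂_PhiInv_mul_includeRight_Phi :
    lTensor₂ L.lambda L.PhiInv * Algebra.TensorProduct.includeRight L.Phi
      = comulLeft Q L.Phi * (includeLeftAssoc Q.PhiInv * comulMid Q L.PhiInv) := by
  have hC := map_mul_eq_one (includeLeftAssoc (B := B)) Q.Phi_inv_mul
  have hB := map_mul_eq_one (comulMid (B := B) Q) L.Phi_inv_mul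
  have hD := map_mul_eq_one (lTensor₂ L.lambda) L.inv_Phi_mul
  calc _ = lTensor₂ L.lambda L.PhiInv * (Algebra.TensorProduct.includeRight L.Phi
          * comulMid Q L.Phi * includeLeftAssoc Q.Phi)
          * (includeLeftAssoc Q.PhiInv * comulMid Q L.PhiInv) := by
        simp only [mul_assoc, ← mul_assoc (includeLeftAssoc Q.Phi), hC, one_mul, hB, mul_one]
    _ = _ := by rw [L.pentagon_eq, ← mul_assoc, ← mul_assoc, hD, one_mul, mul_assoc]

theorem includeRight_PhiInv_mul_lTensor₂_Phi :
    Algebra.TensorProduct.includeRight L.PhiInv * lTensor₂ L.lambda L.Phi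
      = comulMid Q L.Phi * (includeLeftAssoc Q.Phi * comulLeft Q L.PhiInv) := by
  have hA := map_mul_eq_one (Algebra.TensorProduct.includeRight (R := k) (A := H)) L.inv_Phi_mul
  have hE := map_mul_eq_one (comulLeft (B := B) Q) L.Phi_inv_mul
  calc _ = Algebra.TensorProduct.includeRight L.PhiInv
          * (lTensor₂ L.lambda L.Phi * comulLeft Q L.Phi) * comulLeft Q L.PhiInv := by
        rw [mul_assoc, mul_assoc, hE, mul_one]
    _ = _ := by rw [← L.pentagon_eq, ← mul_assoc, ← mul_assoc, ← mul_assoc, hA, one_mul, mul_assoc]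

theorem counitLeft_Phi : counitLeft Q L.Phi = 1 := L.normal_left

theorem counitMid_Phi : counitMid Q L.Phi = 1 := L.normal_mid

theorem counitLeft_PhiInv : counitLeft Q L.PhiInv = 1 := by
  simpa [L.counitLeft_Phi] using map_mul_eq_one (counitLeft Q) L.Phi_inv_mul

theorem counitMid_PhiInv : counitMid Q L.PhiInv = 1 := by
  simpa [L.counitMid_Phi] using map_mul_eq_one (counitMid Q) L.Phi_inv_mul

end LeftComoduleAlgebra

section Contraction

variable {B X : Type} [Ring B] [Algebra k B] [AddCommGroup X] [Module k X]

theorem map_mul_eq_of_tmul (φ : H ⊗[k] (H ⊗[k] (H ⊗[k] B)) →ₗ[k] X)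
    (f g : H ⊗[k] (H ⊗[k] B) →ₐ[k] H ⊗[k] (H ⊗[k] (H ⊗[k] B)))
    (h : ∀ (y₁ y₂ a b c : H) (y₃ d : B),
      φ (f (y₁ ⊗ₜ (y₂ ⊗ₜ y₃)) * (a ⊗ₜ (b ⊗ₜ (c ⊗ₜ d))))
        = φ (g (y₁ ⊗ₜ (y₂ ⊗ₜ y₃)) * (a ⊗ₜ (b ⊗ₜ (c ⊗ₜ d)))))
    (y : H ⊗[k] (H ⊗[k] B)) (w : H ⊗[k] (H ⊗[k] (H ⊗[k] B))) :
    φ (f y * w) = φ (g y * w) := by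
  suffices ((LinearMap.mul k _).compl₁₂ f.toLinearMap LinearMap.id).compr₂ φ
      = ((LinearMap.mul k _).compl₁₂ g.toLinearMap LinearMap.id).compr₂ φ from
    LinearMap.congr_fun₂ this y w
  ext y₁ y₂ y₃ a b c d
  exact h y₁ y₂ a b c y₃ d

theorem map_mul_eq_of_tmul' (φ : H ⊗[k] (H ⊗[k] (H ⊗[k] B)) →ₗ[k] X)
    (f g : H ⊗[k] (H ⊗[k] B) →ₐ[k] H ⊗[k] (H ⊗[k] (H ⊗[k] B)))
    (h : ∀ (y₁ y₂ a b c : H) (y₃ d : B),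
      φ ((a ⊗ₜ (b ⊗ₜ (c ⊗ₜ d))) * f (y₁ ⊗ₜ (y₂ ⊗ₜ y₃)))
        = φ ((a ⊗ₜ (b ⊗ₜ (c ⊗ₜ d))) * g (y₁ ⊗ₜ (y₂ ⊗ₜ y₃))))
    (y : H ⊗[k] (H ⊗[k] B)) (w : H ⊗[k] (H ⊗[k] (H ⊗[k] B))) :
    φ (w * f y) = φ (w * g y) := by
  suffices ((LinearMap.mul k _).flip.compl₁₂ f.toLinearMap LinearMap.id).compr₂ φ
      = ((LinearMap.mul k _).flip.compl₁₂ g.toLinearMap LinearMap.id).compr₂ φ from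
    LinearMap.congr_fun₂ this y w
  ext y₁ y₂ y₃ a b c d
  exact h y₁ y₂ a b c y₃ d

def rightContraction (Sinv : H →ₗ[k] H) (α β : H) :
    H ⊗[k] (H ⊗[k] (H ⊗[k] B)) →ₗ[k] H ⊗[k] B :=
  TensorProduct.map (LinearMap.mul' k H ∘ₗ (TensorProduct.comm k H H).toLinearMap) LinearMap.id
    ∘ₗ (TensorProduct.assoc k H H B).symm.toLinearMap
    ∘ₗ TensorProduct.map (LinearMap.mul' k H ∘ₗ (TensorProduct.comm k H H).toLinearMap)
      LinearMap.id
    ∘ₗ (TensorProduct.assoc k H H (H ⊗[k] B)).symm.toLinearMap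
    ∘ₗ LinearMap.lTensor H
      (LinearMap.rTensor (H ⊗[k] B) (Sinv ∘ₗ LinearMap.mulLeft k α ∘ₗ LinearMap.mulRight k β))

def leftContraction (S : H →ₗ[k] H) (α β : H) :
    H ⊗[k] (H ⊗[k] (H ⊗[k] B)) →ₗ[k] H ⊗[k] B :=
  TensorProduct.map (LinearMap.mul' k H) LinearMap.id
    ∘ₗ (TensorProduct.assoc k H H B).symm.toLinearMap
    ∘ₗ TensorProduct.map (LinearMap.mul' k H) LinearMap.id
    ∘ₗ (TensorProduct.assoc k H H (H ⊗[k] B)).symm.toLinearMap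
    ∘ₗ LinearMap.lTensor H
      (LinearMap.rTensor (H ⊗[k] B) (LinearMap.mulLeft k β ∘ₗ LinearMap.mulRight k α ∘ₗ S))

@[simp] theorem rightContraction_tmul (Sinv : H →ₗ[k] H) (α β a b c : H) (d : B) :
    rightContraction Sinv α β (a ⊗ₜ (b ⊗ₜ (c ⊗ₜ d))) = (c * (Sinv (α * (b * β)) * a)) ⊗ₜ d := by
  simp [rightContraction]

@[simp] theorem leftContraction_tmul (S : H →ₗ[k] H) (α β a b c : H) (d : B) :
    leftContraction S α β (a ⊗ₜ (b ⊗ₜ (c ⊗ₜ d))) = (a * (β * (S b * α)) * c) ⊗ₜ d := by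
  simp [leftContraction]

variable {Q} {S Sinv : H →ₗ[k] H} {α β : H}

theorem rightContraction_comulLeft_mul (hS : IsAntipode Q S α β)
    (hinv₁ : ∀ h, Sinv (S h) = h) (hinv₂ : ∀ h, S (Sinv h) = h)
    (y : H ⊗[k] (H ⊗[k] B)) (w : H ⊗[k] (H ⊗[k] (H ⊗[k] B))) :
    rightContraction Sinv α β (comulLeft Q y * w)
      = rightContraction Sinv α β (includeRight₂ (counitLeft Q y) * w) := by
  refine map_mul_eq_of_tmul _ (comulLeft Q) (includeRight₂.comp (counitLeft (B := B) Q))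
    (fun y₁ y₂ a b c y₃ d => ?_) y w
  have key (u : H ⊗[k] H) : rightContraction Sinv α β
      (Algebra.TensorProduct.assoc k k k H H (H ⊗[k] B) (u ⊗ₜ (y₂ ⊗ₜ y₃)) * (a ⊗ₜ (b ⊗ₜ (c ⊗ₜ d))))
      = (y₂ * c * Sinv (b * β)
          * Sinv (LinearMap.mul' k H (TensorProduct.map S (LinearMap.mulLeft k α) u)) * a)
          ⊗ₜ (y₃ * d) := by
    induction u using TensorProduct.induction_on with
    | zero => simp
    | add u v hu hv => simp_all [TensorProduct.add_tmul, add_mul, mul_add]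
    | tmul u₁ u₂ => simp [hS.inv_map_mul hinv₁ hinv₂, hinv₁, mul_assoc]
  simp [key, hS.left_id, hS.inv_map_mul hinv₁ hinv₂, mul_assoc, TensorProduct.smul_tmul']

theorem rightContraction_mul_comulMid (hS : IsAntipode Q S α β)
    (hinv₁ : ∀ h, Sinv (S h) = h) (hinv₂ : ∀ h, S (Sinv h) = h)
    (y : H ⊗[k] (H ⊗[k] B)) (w : H ⊗[k] (H ⊗[k] (H ⊗[k] B))) :
    rightContraction Sinv α β (w * comulMid Q y)
      = rightContraction Sinv α β (w * includeOuter (counitMid Q y)) := by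
  refine map_mul_eq_of_tmul' _ (comulMid Q)
    (includeOuter.comp (counitMid (B := B) Q)) (fun y₁ y₂ a b c y₃ d => ?_) y w
  have key (u : H ⊗[k] H) : rightContraction Sinv α β
      ((a * y₁) ⊗ₜ ((b ⊗ₜ (c ⊗ₜ d)) * Algebra.TensorProduct.assoc k k k H H B (u ⊗ₜ y₃)))
      = (c * Sinv (LinearMap.mul' k H (TensorProduct.map (LinearMap.mulRight k β) S u))
          * Sinv b * Sinv α * (a * y₁)) ⊗ₜ (d * y₃) := by
    induction u using TensorProduct.induction_on with
    | zero => simp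
    | add u v hu hv => simp_all [TensorProduct.add_tmul, TensorProduct.tmul_add, add_mul, mul_add]
    | tmul u₁ u₂ => simp [hS.inv_map_mul hinv₁ hinv₂, hinv₁, mul_assoc]
  simp [key, hS.right_id, hS.inv_map_mul hinv₁ hinv₂, mul_assoc, TensorProduct.smul_tmul',
    TensorProduct.tmul_smul]

theorem leftContraction_comulMid_mul (hS : IsAntipode Q S α β)
    (y : H ⊗[k] (H ⊗[k] B)) (w : H ⊗[k] (H ⊗[k] (H ⊗[k] B))) :
    leftContraction S α β (comulMid Q y * w)
      = leftContraction S α β (includeOuter (counitMid Q y) * w) := by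
  refine map_mul_eq_of_tmul _ (comulMid Q)
    (includeOuter.comp (counitMid (B := B) Q)) (fun y₁ y₂ a b c y₃ d => ?_) y w
  have key (u : H ⊗[k] H) : leftContraction S α β
      ((y₁ * a) ⊗ₜ (Algebra.TensorProduct.assoc k k k H H B (u ⊗ₜ y₃) * (b ⊗ₜ (c ⊗ₜ d))))
      = (y₁ * a * β * S b * LinearMap.mul' k H (TensorProduct.map S (LinearMap.mulLeft k α) u) * c)
          ⊗ₜ (y₃ * d) := by
    induction u using TensorProduct.induction_on with
    | zero => simp
    | add u v hu hv => simp_all [TensorProduct.add_tmul, TensorProduct.tmul_add, add_mul, mul_add]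
    | tmul u₁ u₂ => simp [hS.anti_mul, mul_assoc]
  simp [key, hS.left_id, mul_assoc, TensorProduct.smul_tmul', TensorProduct.tmul_smul]

theorem leftContraction_mul_comulLeft (hS : IsAntipode Q S α β)
    (y : H ⊗[k] (H ⊗[k] B)) (w : H ⊗[k] (H ⊗[k] (H ⊗[k] B))) :
    leftContraction S α β (w * comulLeft Q y)
      = leftContraction S α β (w * includeRight₂ (counitLeft Q y)) := by
  refine map_mul_eq_of_tmul' _ (comulLeft Q) (includeRight₂.comp (counitLeft (B := B) Q))
    (fun y₁ y₂ a b c y₃ d => ?_) y w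
  have key (u : H ⊗[k] H) : leftContraction S α β
      ((a ⊗ₜ (b ⊗ₜ (c ⊗ₜ d))) * Algebra.TensorProduct.assoc k k k H H (H ⊗[k] B) (u ⊗ₜ (y₂ ⊗ₜ y₃)))
      = (a * LinearMap.mul' k H (TensorProduct.map (LinearMap.mulRight k β) S u) * S b * α * c * y₂)
          ⊗ₜ (d * y₃) := by
    induction u using TensorProduct.induction_on with
    | zero => simp
    | add u v hu hv => simp_all [TensorProduct.add_tmul, add_mul, mul_add]
    | tmul u₁ u₂ => simp [hS.anti_mul, mul_assoc]
  simp [key, hS.right_id, mul_assoc, TensorProduct.smul_tmul']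

theorem rightContraction_includeLeftAssoc (hSinv_mul : ∀ a b, Sinv (a * b) = Sinv b * Sinv a)
    (hinv₁ : ∀ h, Sinv (S h) = h) (x : H ⊗[k] (H ⊗[k] H)) :
    rightContraction Sinv α β (includeLeftAssoc (B := B) x)
      = Sinv (LinearMap.mul' k H (TensorProduct.map (LinearMap.mulRight k α ∘ₗ S)
          (LinearMap.mul' k H ∘ₗ TensorProduct.map LinearMap.id (LinearMap.mulLeft k β ∘ₗ S)) x))
        ⊗ₜ 1 := by
  induction x using TensorProduct.induction_on₃ with
  | zero => simp
  | add x x' hx hx' => simp_all [TensorProduct.add_tmul]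
  | tmul x₁ x₂ x₃ => simp [hSinv_mul, hinv₁, mul_assoc]

theorem leftContraction_includeLeftAssoc (x : H ⊗[k] (H ⊗[k] H)) :
    leftContraction S α β (includeLeftAssoc (B := B) x)
      = LinearMap.mul' k H (TensorProduct.map (LinearMap.mulRight k β)
          (LinearMap.mul' k H ∘ₗ TensorProduct.map S (LinearMap.mulLeft k α)) x) ⊗ₜ 1 := by
  induction x using TensorProduct.induction_on₃ with
  | zero => simp
  | add x x' hx hx' => simp_all [TensorProduct.add_tmul]
  | tmul x₁ x₂ x₃ => simp [mul_assoc]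

end Contraction

section Elements

variable {B : Type} [Ring B] [Algebra k B]

@[simp] theorem qElt_tmul (S : H →ₗ[k] H) (α a b : H) (c : B) :
    qElt S α (a ⊗ₜ (b ⊗ₜ c)) = (S a * (α * b)) ⊗ₜ c := by
  simp [qElt]

@[simp] theorem pElt_tmul (Sinv : H →ₗ[k] H) (β a b : H) (c : B) :
    pElt Sinv β (a ⊗ₜ (b ⊗ₜ c)) = (b * Sinv (a * β)) ⊗ₜ c := by
  simp [pElt]

@[simp] theorem qElt_add (S : H →ₗ[k] H) (α : H) (x y : H ⊗[k] (H ⊗[k] B)) :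
    qElt S α (x + y) = qElt S α x + qElt S α y := by
  simp [qElt]

@[simp] theorem pElt_add (Sinv : H →ₗ[k] H) (β : H) (x y : H ⊗[k] (H ⊗[k] B)) :
    pElt Sinv β (x + y) = pElt Sinv β x + pElt Sinv β y := by
  simp [pElt]

@[simp] theorem qElt_zero (S : H →ₗ[k] H) (α : H) : qElt S α (0 : H ⊗[k] (H ⊗[k] B)) = 0 := by
  simp [qElt]

@[simp] theorem pElt_zero (Sinv : H →ₗ[k] H) (β : H) : pElt Sinv β (0 : H ⊗[k] (H ⊗[k] B)) = 0 := by
  simp [pElt]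

@[simp] theorem conjR_apply (p : H ⊗[k] B) (x : H) (w : H ⊗[k] B) :
    conjR p x w = w * p * (x ⊗ₜ 1) := rfl

@[simp] theorem conjL_apply (q : H ⊗[k] B) (x : H) (w : H ⊗[k] B) :
    conjL q x w = (x ⊗ₜ 1) * q * w := rfl

variable {S Sinv : H →ₗ[k] H} {α β : H}

theorem lift_conjR_pElt_map_qElt (hSinv_mul : ∀ a b, Sinv (a * b) = Sinv b * Sinv a)
    (hinv₁ : ∀ h, Sinv (S h) = h) (f : B →ₐ[k] H ⊗[k] B) (x y : H ⊗[k] (H ⊗[k] B)) :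
    TensorProduct.lift (conjR (pElt Sinv β y)) (TensorProduct.map Sinv f.toLinearMap (qElt S α x))
      = rightContraction Sinv α β (lTensor₂ f x * Algebra.TensorProduct.includeRight y) := by
  induction x using TensorProduct.induction_on₃ with
  | zero => simp
  | add x x' hx hx' => simp [add_mul, hx, hx']
  | tmul x₁ x₂ x₃ =>
    simp only [qElt_tmul, TensorProduct.map_tmul, TensorProduct.lift.tmul, conjR_apply,
      AlgHom.toLinearMap_apply, Algebra.TensorProduct.map_tmul, AlgHom.coe_id, id_eq]
    generalize f x₃ = v
    induction y using TensorProduct.induction_on₃ with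
    | zero => simp
    | add y y' hy hy' => simp only [pElt_add, map_add, mul_add, add_mul, hy, hy']
    | tmul y₁ y₂ y₃ =>
      induction v using TensorProduct.induction_on with
      | zero => simp
      | add v v' hv hv' => simp only [TensorProduct.tmul_add, add_mul, map_add, hv, hv']
      | tmul v₁ v₂ => simp [hSinv_mul, hinv₁, mul_assoc]

theorem lift_conjL_qElt_map_pElt (hS_mul : ∀ a b, S (a * b) = S b * S a)
    (hinv₂ : ∀ h, S (Sinv h) = h) (f : B →ₐ[k] H ⊗[k] B) (x y : H ⊗[k] (H ⊗[k] B)) :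
    TensorProduct.lift (conjL (qElt S α x)) (TensorProduct.map S f.toLinearMap (pElt Sinv β y))
      = leftContraction S α β (Algebra.TensorProduct.includeRight x * lTensor₂ f y) := by
  induction y using TensorProduct.induction_on₃ with
  | zero => simp
  | add y y' hy hy' => simp [mul_add, hy, hy']
  | tmul y₁ y₂ y₃ =>
    simp only [pElt_tmul, TensorProduct.map_tmul, TensorProduct.lift.tmul, conjL_apply,
      AlgHom.toLinearMap_apply, Algebra.TensorProduct.map_tmul, AlgHom.coe_id, id_eq]
    generalize f y₃ = v
    induction x using TensorProduct.induction_on₃ with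
    | zero => simp
    | add x x' hx hx' => simp only [qElt_add, map_add, mul_add, add_mul, hx, hx']
    | tmul x₁ x₂ x₃ =>
      induction v using TensorProduct.induction_on with
      | zero => simp
      | add v v' hv hv' => simp only [TensorProduct.tmul_add, mul_add, map_add, hv, hv']
      | tmul v₁ v₂ => simp [hS_mul, hinv₂, mul_assoc]

end Elements

/-- STATEMENT 4: `λ(q̃²_λ) p̃_λ [S⁻¹(q̃¹_λ) ⊗ 1] = 1 ⊗ 1` and
`[S(p̃¹_λ) ⊗ 1] q̃_λ λ(p̃²_λ) = 1 ⊗ 1` in `H ⊗ B`. -/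
theorem pq_identities
    {k : Type} [Field k] {H : Type} [Ring H] [Algebra k H]
    {B : Type} [Ring B] [Algebra k B]
    (Q : QuasiBialgebra k H) (S Sinv : H →ₗ[k] H) (α β : H)
    (hS : IsAntipode Q S α β)
    (hinv₁ : ∀ h : H, Sinv (S h) = h) (hinv₂ : ∀ h : H, S (Sinv h) = h)
    (L : LeftComoduleAlgebra Q B) :
    (TensorProduct.lift (conjR (pElt Sinv β L.Phi)))
        ((TensorProduct.map Sinv L.lambda.toLinearMap) (qElt S α L.PhiInv)) = 1
    ∧ (TensorProduct.lift (conjL (qElt S α L.PhiInv)))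
        ((TensorProduct.map S L.lambda.toLinearMap) (pElt Sinv β L.Phi)) = 1 := by
  have hSinv_mul := hS.inv_map_mul hinv₁ hinv₂
  constructor
  · rw [lift_conjR_pElt_map_qElt hSinv_mul hinv₁, L.lTensor₂_PhiInv_mul_includeRight_Phi,
      rightContraction_comulLeft_mul hS hinv₁ hinv₂, L.counitLeft_Phi, map_one, one_mul,
      rightContraction_mul_comulMid hS hinv₁ hinv₂, L.counitMid_PhiInv, map_one, mul_one,
      rightContraction_includeLeftAssoc hSinv_mul hinv₁, hS.phiInv_id, hS.inv_map_one hinv₁]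
    rfl
  · rw [lift_conjL_qElt_map_pElt hS.anti_mul hinv₂, L.includeRight_PhiInv_mul_lTensor₂_Phi,
      leftContraction_comulMid_mul hS, L.counitMid_Phi, map_one, one_mul,
      leftContraction_mul_comulLeft hS, L.counitLeft_PhiInv, map_one, mul_one,
      leftContraction_includeLeftAssoc, hS.phi_id]
    rfl

end QuasiHopfPaper
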